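/- For every pointed Kripke model M,w in which every accessibility relation R_a is reflexive, there exists a pointed Kripke model N,w' in which every accessibility relation is an equivalence relation such that M,w is agent-nonrepeating bisimilar to N,w'. Consequently, the logics T and S5 prove exactly the same agent-nonrepeating formulas. -/

import Mathlib

/-- Formulas of the multi-agent modal language: p | ¬φ | (φ ∧ φ) | □_a φ. -/
inductive Fm (A : Type) : Type
  | atom : ℕ → Fm A
  | neg : Fm A → Fm A
  | and : Fm A → Fm A → Fm A
  | box : A → Fm A → Fm A

namespace Fm
def imp {A : Type} (φ ψ : Fm A) : Fm A := .neg (.and φ (.neg ψ))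
def or {A : Type} (φ ψ : Fm A) : Fm A := .neg (.and (.neg φ) (.neg ψ))
def dia {A : Type} (a : A) (φ : Fm A) : Fm A := .neg (.box a (.neg φ))
end Fm

/-- Kripke models with agent set `A` and world type `W`. -/
structure Kripke (A W : Type) where
  R : A → W → W → Prop
  V : ℕ → W → Prop

/-- Satisfaction. -/
def Sat {A W : Type} (M : Kripke A W) : W → Fm A → Prop
  | w, .atom n => M.V n w
  | w, .neg φ => ¬ Sat M w φ
  | w, .and φ ψ => Sat M w φ ∧ Sat M w ψ
  | w, .box a φ => ∀ v, M.R a w v → Sat M v φ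

/-- The fragments L_{-a}: φ ::= p | □_x ψ (x ≠ a, ψ ∈ L_{-x}) | ¬φ | (φ ∧ φ). -/
inductive LMinus {A : Type} : A → Fm A → Prop
  | atom (a : A) (n : ℕ) : LMinus a (.atom n)
  | box {a x : A} {ψ : Fm A} : x ≠ a → LMinus x ψ → LMinus a (.box x ψ)
  | neg {a : A} {φ : Fm A} : LMinus a φ → LMinus a (.neg φ)
  | and {a : A} {φ ψ : Fm A} : LMinus a φ → LMinus a ψ → LMinus a (.and φ ψ)

/-- The agent-alternating fragment L_alt. -/
inductive LAlt {A : Type} : Fm A → Prop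
  | atom (n : ℕ) : LAlt (.atom n)
  | chi {φ : Fm A} (a : A) : LMinus a φ → LAlt φ
  | neg {φ : Fm A} : LAlt φ → LAlt (.neg φ)
  | and {φ ψ : Fm A} : LAlt φ → LAlt ψ → LAlt (.and φ ψ)

/-- The fragments L_X for X ⊆ A: φ ::= p | □_x ψ (x ∈ X, ψ ∈ L_{X\{x}}) | ¬φ | (φ ∧ φ). -/
inductive LX {A : Type} : Set A → Fm A → Prop
  | atom (X : Set A) (n : ℕ) : LX X (.atom n)
  | box {X : Set A} {x : A} {ψ : Fm A} : x ∈ X → LX (X \ {x}) ψ → LX X (.box x ψ)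
  | neg {X : Set A} {φ : Fm A} : LX X φ → LX X (.neg φ)
  | and {X : Set A} {φ ψ : Fm A} : LX X φ → LX X ψ → LX X (.and φ ψ)

/-- Immediate subformula relation. -/
inductive ISub {A : Type} : Fm A → Fm A → Prop
  | neg (φ : Fm A) : ISub φ (.neg φ)
  | andL (φ ψ : Fm A) : ISub φ (.and φ ψ)
  | andR (φ ψ : Fm A) : ISub ψ (.and φ ψ)
  | box (a : A) (φ : Fm A) : ISub φ (.box a φ)

/-- An occurrence type of φ: a nonempty sequence of formulas, each an immediate
subformula of the next, ending in φ. -/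
def IsOcc {A : Type} (l : List (Fm A)) (φ : Fm A) : Prop :=
  l ≠ [] ∧ l.getLast? = some φ ∧ List.Chain' ISub l

/-- A □_a-occurrence of φ. -/
def IsBoxOcc {A : Type} (a : A) (l : List (Fm A)) (φ : Fm A) : Prop :=
  IsOcc l φ ∧ ∃ β, l.head? = some (Fm.box a β)

/-- O ≤ O' iff O' is a suffix of O (prefix-extension order on occurrences). -/
def OccLe {A : Type} (O O' : List (Fm A)) : Prop := O' <:+ O

/-- φ is agent-alternating: between any two nested □_a-occurrences there is a
□_b-occurrence for some b ≠ a. -/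
def AgentAlternating {A : Type} (φ : Fm A) : Prop :=
  ∀ (a : A) (O O' : List (Fm A)), IsBoxOcc a O φ → IsBoxOcc a O' φ → O ≠ O' → OccLe O O' →
    ∃ b : A, b ≠ a ∧ ∃ O'' : List (Fm A), IsBoxOcc b O'' φ ∧ OccLe O O'' ∧ OccLe O'' O'

/-- φ is agent-nonrepeating: no □_a-occurrence lies below another □_a-occurrence. -/
def AgentNonrepeating {A : Type} (φ : Fm A) : Prop :=
  ∀ (a : A) (O O' : List (Fm A)), IsBoxOcc a O φ → IsBoxOcc a O' φ → O ≠ O' → ¬ OccLe O O'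

/-- Boolean evaluation treating atoms and boxed formulas as atomic. -/
def evalP {A : Type} (v : Fm A → Bool) : Fm A → Bool
  | .neg φ => ! evalP v φ
  | .and φ ψ => evalP v φ && evalP v ψ
  | φ => v φ

/-- Propositional tautologies (in the signature ¬, ∧, with boxed formulas atomic). -/
def Taut {A : Type} (φ : Fm A) : Prop := ∀ v : Fm A → Bool, evalP v φ = true

/-- Provability in the smallest normal modal logic containing the axioms `Ax`. -/
inductive Prv {A : Type} (Ax : Fm A → Prop) : Fm A → Prop
  | taut {φ : Fm A} : Taut φ → Prv Ax φ
  | ax {φ : Fm A} : Ax φ → Prv Ax φ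
  | k (a : A) (φ ψ : Fm A) :
      Prv Ax (Fm.imp (.box a (Fm.imp φ ψ)) (Fm.imp (.box a φ) (.box a ψ)))
  | mp {φ ψ : Fm A} : Prv Ax (Fm.imp φ ψ) → Prv Ax φ → Prv Ax ψ
  | nec {φ : Fm A} (a : A) : Prv Ax φ → Prv Ax (.box a φ)

def AxNone {A : Type} : Fm A → Prop := fun _ => False
def AxT {A : Type} : Fm A → Prop := fun χ => ∃ (a : A) (φ : Fm A), χ = Fm.imp (.box a φ) φ
def Ax4 {A : Type} : Fm A → Prop := fun χ => ∃ (a : A) (φ : Fm A), χ = Fm.imp (.box a φ) (.box a (.box a φ))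
def Ax5 {A : Type} : Fm A → Prop := fun χ => ∃ (a : A) (φ : Fm A), χ = Fm.imp (.neg (.box a φ)) (.box a (.neg (.box a φ)))
def AxB {A : Type} : Fm A → Prop := fun χ => ∃ (a : A) (φ : Fm A), χ = Fm.imp φ (.box a (Fm.dia a φ))
def AxD {A : Type} : Fm A → Prop := fun χ => ∃ (a : A) (φ : Fm A), χ = Fm.imp (.box a φ) (Fm.dia a φ)

def Ser {W : Type} (R : W → W → Prop) : Prop := ∀ u, ∃ v, R u v
def Eucl {W : Type} (R : W → W → Prop) : Prop := ∀ u v w, R u v → R u w → R v w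

/-- Agent-alternating bisimulation family (`none` plays the role of `alt`). -/
def IsAAFamily {A W1 W2 : Type} (M : Kripke A W1) (N : Kripke A W2)
    (f : Option A → W1 → W2 → Prop) : Prop :=
  ∀ (o : Option A) (u : W1) (v : W2), f o u v →
    (∀ n, M.V n u ↔ N.V n v) ∧
    (∀ b : A, o ≠ some b →
      (∀ u', M.R b u u' → ∃ v', N.R b v v' ∧ f (some b) u' v') ∧
      (∀ v', N.R b v v' → ∃ u', M.R b u u' ∧ f (some b) u' v'))

/-- Agent-nonrepeating bisimulation family. -/
def IsNRFamily {A W1 W2 : Type} (M : Kripke A W1) (N : Kripke A W2)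
    (f : Set A → W1 → W2 → Prop) : Prop :=
  ∀ (X : Set A) (u : W1) (v : W2), f X u v →
    (∀ n, M.V n u ↔ N.V n v) ∧
    (∀ x ∈ X,
      (∀ u', M.R x u u' → ∃ v', N.R x v v' ∧ f (X \ {x}) u' v') ∧
      (∀ v', N.R x v v' → ∃ u', M.R x u u' ∧ f (X \ {x}) u' v'))

/-- One step in an agent-alternating sequence. -/
def Step {A W : Type} (M : Kripke A W) : (Option A × W) → (Option A × W) → Prop :=
  fun x y => x.1 ≠ y.1 ∧ ∃ b : A, y.1 = some b ∧ M.R b x.2 y.2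

/-- Valid worlds of an agent-alternating unraveling. -/
def ValidSeq {A W : Type} (M : Kripke A W) (s : List (Option A × W)) : Prop :=
  s ≠ [] ∧ (∃ w, s.head? = some (none, w)) ∧ (∀ x ∈ s.tail, x.1 ≠ none) ∧
    List.Chain' (Step M) s

def UWorld {A W : Type} (M : Kripke A W) : Type := {s : List (Option A × W) // ValidSeq M s}

def lastEntry {A W : Type} {M : Kripke A W} (s : UWorld M) : Option A × W :=
  s.val.getLast s.prop.1

/-- N is an agent-alternating unraveling of M. -/
def IsAAUnraveling {A W : Type} (M : Kripke A W) (N : Kripke A (UWorld M)) : Prop :=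
  (∀ (b : A) (s : UWorld M), (lastEntry s).1 ≠ some b →
    ∀ t : UWorld M, N.R b s t ↔ ∃ w', M.R b (lastEntry s).2 w' ∧ t.val = s.val ++ [(some b, w')])
  ∧ (∀ n (s : UWorld M), N.V n s ↔ M.V n (lastEntry s).2)

/-- The canonical relation family between M and any of its agent-alternating unravelings. -/
def PFam {A W : Type} (M : Kripke A W) : Option A → W → UWorld M → Prop :=
  fun o u s => lastEntry s = (o, u)

/-- Finite agent-alternating bisimulation relations: `BisimN M N n (some a)` is ⇆_{-a}^n,
`BisimN M N n none` is ⇆_alt^n. -/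
def BisimN {A W1 W2 : Type} (M : Kripke A W1) (N : Kripke A W2) :
    ℕ → Option A → W1 → W2 → Prop
  | 0, _, u, v => ∀ n, M.V n u ↔ N.V n v
  | (n+1), o, u, v => (∀ m, M.V m u ↔ N.V m v) ∧
      ∀ b : A, o ≠ some b →
        (∀ u', M.R b u u' → ∃ v', N.R b v v' ∧ BisimN M N n (some b) u' v') ∧
        (∀ v', N.R b v v' → ∃ u', M.R b u u' ∧ BisimN M N n (some b) u' v')

/-- Standard n-bisimilarity. -/
def StdBisimN {A W1 W2 : Type} (M : Kripke A W1) (N : Kripke A W2) :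
    ℕ → W1 → W2 → Prop
  | 0, u, v => ∀ n, M.V n u ↔ N.V n v
  | (n+1), u, v => (∀ m, M.V m u ↔ N.V m v) ∧
      ∀ b : A,
        (∀ u', M.R b u u' → ∃ v', N.R b v v' ∧ StdBisimN M N n u' v') ∧
        (∀ v', N.R b v v' → ∃ u', M.R b u u' ∧ StdBisimN M N n u' v')

/-!
Unravel `M` from `w` into the model of finite `M`-paths `w →a₁ v₁ →a₂ ⋯ →aₙ vₙ`, and call two
paths `a`-related when they agree after deleting a final `a`-step (if there is one). This is an
equivalence relation. A path using no agent of `X` is `⇆_X`-related to its endpoint: an `x`-step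
of `M` (`x ∈ X`) is matched by appending it to the path, and an `x`-successor of the path either
appends an `x`-step or is the path itself, which is matched by reflexivity of `R_x` in `M`.

If `T ⊬ φ`, the canonical model of `T` is reflexive and refutes `φ`; unravelling it gives a
partition model, which validates `S5`, and it still refutes `φ` when `φ ∈ L_A` because `L_A` is
invariant under `⇆_A`.
-/

section Propositional
variable {A : Type}

namespace Fm

def top : Fm A := imp (atom 0) (atom 0)

def conj : List (Fm A) → Fm A
  | [] => top
  | φ :: l => and φ (conj l)

end Fm

@[simp, grind =] lemma evalP_neg (v : Fm A → Bool) (φ : Fm A) :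
    evalP v (.neg φ) = !evalP v φ := rfl

@[simp, grind =] lemma evalP_and (v : Fm A → Bool) (φ ψ : Fm A) :
    evalP v (.and φ ψ) = (evalP v φ && evalP v ψ) := rfl

@[simp, grind =] lemma evalP_imp (v : Fm A → Bool) (φ ψ : Fm A) :
    evalP v (Fm.imp φ ψ) = (!evalP v φ || evalP v ψ) := by
  simp [Fm.imp]

@[simp, grind =] lemma evalP_conj (v : Fm A → Bool) (l : List (Fm A)) :
    evalP v (Fm.conj l) = l.all (evalP v) := by
  induction l with
  | nil => simp [Fm.conj, Fm.top, evalP]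
  | cons φ l ih => simp [Fm.conj, ih]

namespace Prv

variable {Ax Ax' : Fm A → Prop} {φ ψ χ : Fm A}

lemma mono (h : ∀ χ, Ax χ → Ax' χ) (hp : Prv Ax φ) : Prv Ax' φ := by
  induction hp with
  | taut ht => exact .taut ht
  | ax ha => exact .ax (h _ ha)
  | k a φ ψ => exact .k a φ ψ
  | mp _ _ ih₁ ih₂ => exact .mp ih₁ ih₂
  | nec a _ ih => exact .nec a ih

lemma mp_taut (t : Taut (Fm.imp φ ψ)) (h : Prv Ax φ) : Prv Ax ψ :=
  .mp (.taut t) h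

lemma mp₂_taut (t : Taut (Fm.imp φ (Fm.imp ψ χ))) (h₁ : Prv Ax φ) (h₂ : Prv Ax ψ) :
    Prv Ax χ :=
  .mp (.mp (.taut t) h₁) h₂

lemma box_conj_imp (a : A) {l : List (Fm A)} (h : Prv Ax (Fm.imp (Fm.conj l) φ)) :
    Prv Ax (Fm.imp (Fm.conj (l.map (Fm.box a))) (Fm.box a φ)) := by
  induction l generalizing φ with
  | nil =>
    have hφ : Prv Ax φ := mp_taut (fun v => by simp) h
    exact mp_taut (fun v => by simp) (nec a hφ)
  | cons ψ l ih =>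
    have h' : Prv Ax (Fm.imp (Fm.conj l) (Fm.imp ψ φ)) :=
      mp_taut (fun v => by grind) h
    exact mp₂_taut (fun v => by grind) (ih h') (k a ψ φ)

end Prv

end Propositional

section Soundness

variable {A W : Type} {M : Kripke A W}

lemma sat_imp {w : W} {φ ψ : Fm A} : Sat M w (Fm.imp φ ψ) ↔ (Sat M w φ → Sat M w ψ) := by
  simp [Fm.imp, Sat]

lemma evalP_eq_true_iff_sat {v : Fm A → Bool} {w : W} (hv : ∀ χ, v χ = true ↔ Sat M w χ)
    (φ : Fm A) : evalP v φ = true ↔ Sat M w φ := by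
  induction φ with
  | atom n => exact hv _
  | neg φ ih => simp [Sat, ← ih]
  | and φ ψ ih₁ ih₂ => simp [Sat, ih₁, ih₂]
  | box a φ => exact hv _

lemma Taut.sat {φ : Fm A} (h : Taut φ) (w : W) : Sat M w φ := by
  classical
  exact (evalP_eq_true_iff_sat (fun χ => decide_eq_true_iff) φ).1 (h _)

lemma Prv.sat {Ax : Fm A → Prop} {φ : Fm A} (h : Prv Ax φ)
    (hAx : ∀ χ, Ax χ → ∀ u, Sat M u χ) (w : W) : Sat M w φ := by
  induction h generalizing w with
  | taut ht => exact ht.sat w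
  | ax ha => exact hAx _ ha w
  | k a φ ψ => exact sat_imp.2 fun h₁ => sat_imp.2 fun h₂ v hv => sat_imp.1 (h₁ v hv) (h₂ v hv)
  | mp _ _ ih₁ ih₂ => exact sat_imp.1 (ih₁ w) (ih₂ w)
  | nec a _ ih => exact fun v _ => ih v

lemma sat_axT_of_reflexive (hR : ∀ a, Reflexive (M.R a)) {χ : Fm A} (hχ : AxT χ) (w : W) :
    Sat M w χ := by
  obtain ⟨a, φ, rfl⟩ := hχ
  exact sat_imp.2 fun h => h w (hR a w)

lemma sat_ax5_of_euclidean (hR : ∀ a, Eucl (M.R a)) {χ : Fm A} (hχ : Ax5 χ) (w : W) :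
    Sat M w χ := by
  obtain ⟨a, φ, rfl⟩ := hχ
  exact sat_imp.2 fun h v hv hbox => h fun z hz => hbox z (hR a w v z hv hz)

end Soundness

section Canonical

variable {A : Type} {Ax : Fm A → Prop}

def Consistent (Ax : Fm A → Prop) (S : Set (Fm A)) : Prop :=
  ∀ l : List (Fm A), (∀ ψ ∈ l, ψ ∈ S) → ¬ Prv Ax (Fm.neg (Fm.conj l))

lemma Consistent.mono {S T : Set (Fm A)} (hT : Consistent Ax T) (h : S ⊆ T) :
    Consistent Ax S :=
  fun l hl => hT l fun ψ hψ => h (hl ψ hψ)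

lemma isOfFiniteCharacter_consistent :
    Order.IsOfFiniteCharacter {S : Set (Fm A) | Consistent Ax S} :=
  fun _ => ⟨fun hS _ hT _ => hS.mono hT,
    fun h l hl => h {ψ | ψ ∈ l} (fun ψ hψ => hl ψ hψ) l.finite_toSet l fun _ hψ => hψ⟩

lemma exists_prv_imp_neg_of_not_consistent_insert {S : Set (Fm A)} {φ : Fm A}
    (h : ¬ Consistent Ax (insert φ S)) :
    ∃ l : List (Fm A), (∀ ψ ∈ l, ψ ∈ S) ∧ Prv Ax (Fm.imp (Fm.conj l) (Fm.neg φ)) := by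
  classical
  simp only [Consistent, not_forall, not_not] at h
  obtain ⟨l, hl, hp⟩ := h
  refine ⟨l.filter (· ≠ φ), fun ψ hψ => ?_, Prv.mp_taut (fun v => ?_) hp⟩
  · simp only [List.mem_filter, decide_eq_true_eq] at hψ
    exact (hl ψ hψ.1).resolve_left hψ.2
  · simp only [evalP_imp, evalP_neg, evalP_conj, List.all_filter]
    grind

def MaxConsistent (Ax : Fm A → Prop) (Γ : Set (Fm A)) : Prop := Maximal (Consistent Ax) Γ

lemma Consistent.exists_maxConsistent_superset {S : Set (Fm A)} (hS : Consistent Ax S) :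
    ∃ Γ, S ⊆ Γ ∧ MaxConsistent Ax Γ :=
  isOfFiniteCharacter_consistent.exists_maximal hS

namespace MaxConsistent

variable {Γ : Set (Fm A)}

lemma mem_of_prv_conj_imp (hΓ : MaxConsistent Ax Γ) {l : List (Fm A)} {φ : Fm A}
    (hl : ∀ ψ ∈ l, ψ ∈ Γ) (h : Prv Ax (Fm.imp (Fm.conj l) φ)) : φ ∈ Γ := by
  refine hΓ.mem_of_prop_insert (by_contra fun hc => ?_)
  obtain ⟨l', hl', h'⟩ := exists_prv_imp_neg_of_not_consistent_insert hc
  exact hΓ.prop (l' ++ l) (by grind) (Prv.mp₂_taut (fun v => by grind) h' h)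

lemma neg_mem_iff (hΓ : MaxConsistent Ax Γ) {φ : Fm A} : Fm.neg φ ∈ Γ ↔ φ ∉ Γ := by
  refine ⟨fun hn h => hΓ.prop [φ, Fm.neg φ] (by simp [h, hn]) (.taut fun v => by simp), fun h => ?_⟩
  obtain ⟨l, hl, hp⟩ := exists_prv_imp_neg_of_not_consistent_insert
    fun hc => h (hΓ.mem_of_prop_insert hc)
  exact hΓ.mem_of_prv_conj_imp hl hp

lemma and_mem_iff (hΓ : MaxConsistent Ax Γ) {φ ψ : Fm A} : Fm.and φ ψ ∈ Γ ↔ φ ∈ Γ ∧ ψ ∈ Γ := by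
  refine ⟨fun h => ⟨?_, ?_⟩, fun h => ?_⟩
  · exact hΓ.mem_of_prv_conj_imp (l := [Fm.and φ ψ]) (by simp [h]) (.taut fun v => by grind)
  · exact hΓ.mem_of_prv_conj_imp (l := [Fm.and φ ψ]) (by simp [h]) (.taut fun v => by grind)
  · exact hΓ.mem_of_prv_conj_imp (l := [φ, ψ]) (by simp [h]) (.taut fun v => by grind)

end MaxConsistent

def canonical (Ax : Fm A → Prop) : Kripke A {Γ : Set (Fm A) // MaxConsistent Ax Γ} where
  R a Γ Δ := ∀ ψ, Fm.box a ψ ∈ Γ.1 → ψ ∈ Δ.1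
  V n Γ := Fm.atom n ∈ Γ.1

lemma exists_canonical_R_not_mem {Γ} {a : A} {φ : Fm A} (h : Fm.box a φ ∉ Γ.1) :
    ∃ Δ, (canonical Ax).R a Γ Δ ∧ φ ∉ Δ.1 := by
  have hcon : Consistent Ax (insert (Fm.neg φ) {ψ | Fm.box a ψ ∈ Γ.1}) := by
    intro l hl hp
    obtain ⟨l, hl, hp⟩ := exists_prv_imp_neg_of_not_consistent_insert fun hc => hc l hl hp
    refine h (Γ.2.mem_of_prv_conj_imp (l := l.map (Fm.box a)) (by simpa using hl) ?_)
    exact Prv.box_conj_imp a (Prv.mp_taut (fun v => by grind) hp)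
  obtain ⟨Δ, hsub, hΔ⟩ := hcon.exists_maxConsistent_superset
  refine ⟨⟨Δ, hΔ⟩, fun ψ hψ => hsub (Set.mem_insert_of_mem _ hψ), fun hφ => ?_⟩
  exact (hΔ.neg_mem_iff.1 (hsub (Set.mem_insert _ _))) hφ

lemma sat_canonical_iff (φ : Fm A) (Γ) : Sat (canonical Ax) Γ φ ↔ φ ∈ Γ.1 := by
  induction φ generalizing Γ with
  | atom n => rfl
  | neg φ ih => exact (not_congr (ih Γ)).trans Γ.2.neg_mem_iff.symm
  | and φ ψ ih₁ ih₂ => exact (and_congr (ih₁ Γ) (ih₂ Γ)).trans Γ.2.and_mem_iff.symm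
  | box a φ ih =>
    refine ⟨fun h => by_contra fun hb => ?_, fun h Δ hR => (ih Δ).2 (hR φ h)⟩
    obtain ⟨Δ, hR, hφ⟩ := exists_canonical_R_not_mem hb
    exact hφ ((ih Δ).1 (h Δ hR))

lemma exists_not_sat_canonical {φ : Fm A} (h : ¬ Prv Ax φ) :
    ∃ Γ, ¬ Sat (canonical Ax) Γ φ := by
  have hcon : Consistent Ax (insert (Fm.neg φ) ∅) := by
    intro l hl hp
    obtain ⟨l, hl, hp⟩ := exists_prv_imp_neg_of_not_consistent_insert fun hc => hc l hl hp
    obtain rfl : l = [] := List.eq_nil_iff_forall_not_mem.2 hl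
    exact h (Prv.mp_taut (fun v => by simp) hp)
  obtain ⟨Γ, hsub, hΓ⟩ := hcon.exists_maxConsistent_superset
  exact ⟨⟨Γ, hΓ⟩, fun hs => hΓ.neg_mem_iff.1 (hsub (Set.mem_insert _ _))
    ((sat_canonical_iff φ _).1 hs)⟩

lemma canonical_reflexive (hT : ∀ χ, AxT χ → Ax χ) (a : A) : Reflexive ((canonical Ax).R a) :=
  fun Γ ψ h => Γ.2.mem_of_prv_conj_imp (l := [Fm.box a ψ]) (by simpa using h)
    (Prv.mp_taut (fun v => by grind) (.ax (hT _ ⟨a, ψ, rfl⟩)))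

end Canonical

lemma IsNRFamily.sat_iff {A W₁ W₂ : Type} {M : Kripke A W₁} {N : Kripke A W₂}
    {f : Set A → W₁ → W₂ → Prop} (hf : IsNRFamily M N f) {X : Set A} {φ : Fm A}
    (hφ : LX X φ) {u : W₁} {v : W₂} (huv : f X u v) : Sat M u φ ↔ Sat N v φ := by
  induction hφ generalizing u v with
  | atom X n => exact (hf X u v huv).1 n
  | @box X x ψ hx _ ih =>
    obtain ⟨forth, back⟩ := (hf X u v huv).2 x hx
    refine ⟨fun h v' hv' => ?_, fun h u' hu' => ?_⟩
    · obtain ⟨u', hu', hf'⟩ := back v' hv'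
      exact (ih hf').1 (h u' hu')
    · obtain ⟨v', hv', hf'⟩ := forth u' hu'
      exact (ih hf').2 (h v' hv')
  | neg _ ih => exact not_congr (ih huv)
  | and _ _ ih₁ ih₂ => exact and_congr (ih₁ huv) (ih₂ huv)

section PathModel

variable {A W : Type} (M : Kripke A W) (w : W)

/-- Paths from `w` are stored last step first: `(a, v) :: l` extends the path `l` by an `a`-step
to `v`. -/
def pathEnd : List (A × W) → W
  | [] => w
  | (_, v) :: _ => v

def IsPath : List (A × W) → Prop
  | [] => True
  | (a, v) :: l => IsPath l ∧ M.R a (pathEnd w l) v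

variable [DecidableEq A]

def popLabel (a : A) : List (A × W) → List (A × W)
  | [] => []
  | (b, v) :: l => if b = a then l else (b, v) :: l

def pathModel : Kripke A {l // IsPath M w l} where
  R a s t := popLabel a s.1 = popLabel a t.1
  V n s := M.V n (pathEnd w s.1)

def pathFamily (X : Set A) (u : W) (s : {l // IsPath M w l}) : Prop :=
  pathEnd w s.1 = u ∧ ∀ p ∈ s.1, p.1 ∉ X

variable {M w}

lemma popLabel_of_forall_ne {a : A} {l : List (A × W)} (h : ∀ p ∈ l, p.1 ≠ a) :
    popLabel a l = l := by
  cases l with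
  | nil => rfl
  | cons p l => exact if_neg (h p List.mem_cons_self)

lemma eq_or_eq_cons_of_popLabel_eq {a : A} {l t : List (A × W)} (h : popLabel a t = l) :
    t = l ∨ ∃ v, t = (a, v) :: l := by
  match t with
  | [] => exact .inl h
  | (b, v) :: t =>
    by_cases hb : b = a
    · subst hb
      exact .inr ⟨v, by simp_all [popLabel]⟩
    · exact .inl (by simpa [popLabel, hb] using h)

lemma pathModel_equivalence (a : A) : Equivalence ((pathModel M w).R a) :=
  ⟨fun _ => rfl, Eq.symm, Eq.trans⟩

lemma isNRFamily_pathFamily (hrefl : ∀ a, Reflexive (M.R a)) :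
    IsNRFamily M (pathModel M w) (pathFamily M w) := by
  rintro X u ⟨l, hl⟩ ⟨rfl, hX⟩
  refine ⟨fun n => Iff.rfl, fun x hx => ?_⟩
  have hpop : popLabel x l = l := popLabel_of_forall_ne fun p hp hpx => hX p hp (hpx ▸ hx)
  have hX' (v : W) : ∀ p ∈ (x, v) :: l, p.1 ∉ X \ {x} := by
    simp only [List.mem_cons, forall_eq_or_imp]
    exact ⟨fun h => h.2 rfl, fun p hp h => hX p hp h.1⟩
  refine ⟨fun u' hu' => ⟨⟨(x, u') :: l, hl, hu'⟩, ?_, rfl, hX' u'⟩, fun ⟨t, ht⟩ hR => ?_⟩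
  · show popLabel x l = popLabel x ((x, u') :: l)
    rw [hpop]; simp [popLabel]
  · change popLabel x l = popLabel x t at hR
    rcases eq_or_eq_cons_of_popLabel_eq (hpop ▸ hR).symm with rfl | ⟨v, rfl⟩
    · exact ⟨pathEnd w t, hrefl x _, rfl, fun p hp h => hX p hp h.1⟩
    · exact ⟨v, ht.2, rfl, hX' v⟩

end PathModel

theorem Kripke.exists_partition_nrBisimilar_of_reflexive {A W : Type} (M : Kripke A W) (w : W)
    (hrefl : ∀ a, Reflexive (M.R a)) :
    ∃ (W' : Type) (N : Kripke A W') (w' : W'), (∀ a, Equivalence (N.R a)) ∧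
      ∃ f : Set A → W → W' → Prop, IsNRFamily M N f ∧ f Set.univ w w' := by
  classical
  exact ⟨_, pathModel M w, ⟨[], trivial⟩, pathModel_equivalence, pathFamily M w,
    isNRFamily_pathFamily hrefl, rfl, fun _ h => absurd h List.not_mem_nil⟩

theorem prv_axT_iff_prv_axS5_of_LX_univ {A : Type} {φ : Fm A} (hφ : LX Set.univ φ) :
    Prv AxT φ ↔ Prv (fun χ => AxT χ ∨ Ax5 χ) φ := by
  refine ⟨Prv.mono fun _ => Or.inl, fun h5 => by_contra fun hT => ?_⟩
  obtain ⟨Γ, hΓ⟩ := exists_not_sat_canonical hT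
  obtain ⟨W', N, w', hN, f, hf, hfw⟩ :=
    (canonical AxT).exists_partition_nrBisimilar_of_reflexive Γ (canonical_reflexive fun _ => id)
  have hEucl (a : A) : Eucl (N.R a) := fun _ _ _ huv huz => (hN a).trans ((hN a).symm huv) huz
  refine hΓ ((hf.sat_iff hφ hfw).2 (h5.sat ?_ w'))
  rintro χ (hχ | hχ)
  exacts [sat_axT_of_reflexive (fun a => (hN a).refl) hχ, sat_ax5_of_euclidean hEucl hχ]

theorem stmt10_general {A : Type} :
    (∀ (W : Type) (M : Kripke A W) (w : W), (∀ a : A, Reflexive (M.R a)) →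
      ∃ (W' : Type) (N : Kripke A W') (w' : W'),
        (∀ a : A, Equivalence (N.R a)) ∧
        ∃ f : Set A → W → W' → Prop, IsNRFamily M N f ∧ f Set.univ w w') ∧
    (∀ φ : Fm A, LX (Set.univ : Set A) φ →
      (Prv AxT φ ↔ Prv (fun χ => AxT χ ∨ Ax5 χ) φ)) :=
  ⟨fun _ M w hrefl => M.exists_partition_nrBisimilar_of_reflexive w hrefl,
    fun _ hφ => prv_axT_iff_prv_axS5_of_LX_univ hφ⟩

/-- every reflexive pointed model is agent-nonrepeating bisimilar to a partition
model; hence T = S5 on agent-nonrepeating formulas. -/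
theorem stmt10 {A : Type} (hA : ∃ a b : A, a ≠ b) :
    (∀ (W : Type) (M : Kripke A W) (w : W), (∀ a : A, Reflexive (M.R a)) →
      ∃ (W' : Type) (N : Kripke A W') (w' : W'),
        (∀ a : A, Equivalence (N.R a)) ∧
        ∃ f : Set A → W → W' → Prop, IsNRFamily M N f ∧ f Set.univ w w') ∧
    (∀ φ : Fm A, LX (Set.univ : Set A) φ →
      (Prv AxT φ ↔ Prv (fun χ => AxT χ ∨ Ax5 χ) φ)) :=
  stmt10_general
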